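/- arXiv:1309.6677 — 4 statements merged into one kernel-verified Lean document; each statement's English description precedes it below -/
import Mathlib

section
/- Let A be a ring and (A', h, π) a first order deformation of A, with induced bracket {−, −} on Z(A). Then for all a, b ∈ Z(A), the element {a, b} lies in the center Z(A) of A. -/
/-- `(A', h, π)` is a first order deformation of `A`: `h` is a central element of `A'`,
`π : A' → A` is a surjective ring homomorphism with kernel `hA'`, and the annihilator
`{x ∈ A' : h·x = 0}` equals `hA'`. -/
def IsFirstOrderDeformation {A' A : Type*} [Ring A'] [Ring A] (h : A') (π : A' →+* A) : Prop :=
  (∀ x : A', h * x = x * h) ∧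
  Function.Surjective π ∧
  (∀ x : A', π x = 0 ↔ ∃ y : A', x = h * y) ∧
  (∀ x : A', h * x = 0 ↔ ∃ y : A', x = h * y)

/-- `br` is the bracket on the center `Z(A)` induced by the first order deformation
`(A', h, π)`: for central `a, b`, lifts `ã, b̃`, and `c` with `ã·b̃ − b̃·ã = h·c`, one has
`π(c) = br a b`. -/
def IsInducedBracket {A' A : Type*} [Ring A'] [Ring A] (h : A') (π : A' →+* A)
    (br : A → A → A) : Prop :=
  ∀ a ∈ Set.center A, ∀ b ∈ Set.center A, ∀ atil btil c : A',
    π atil = a → π btil = b → atil * btil - btil * atil = h * c → π c = br a b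

/-- The induced bracket of two central elements is again central. -/
theorem bracket_mem_center {A' A : Type*} [Ring A'] [Ring A]
    (h : A') (π : A' →+* A) (hdef : IsFirstOrderDeformation h π)
    (br : A → A → A) (hbr : IsInducedBracket h π br) :
    ∀ a ∈ Set.center A, ∀ b ∈ Set.center A, br a b ∈ Set.center A := by
  obtain ⟨hcen, hsurj, hker, hann⟩ := hdef
  intro a ha b hb
  obtain ⟨atil, rfl⟩ := hsurj a
  obtain ⟨btil, rfl⟩ := hsurj b
  have hacomm := Set.mem_center_iff.mp ha
  have hbcomm := Set.mem_center_iff.mp hb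
  have h0 : π (atil * btil - btil * atil) = 0 := by
    rw [map_sub, map_mul, map_mul, hacomm.comm (π btil), sub_self]
  obtain ⟨c, hc⟩ := (hker _).mp h0
  have hbrac := hbr _ ha _ hb atil btil c rfl rfl hc
  rw [← hbrac, Semigroup.mem_center_iff]
  intro g
  obtain ⟨x, rfl⟩ := hsurj g
  obtain ⟨s, hs⟩ := (hker (atil * x - x * atil)).mp (by
    rw [map_sub, map_mul, map_mul, hacomm.comm (π x), sub_self])
  obtain ⟨t, ht⟩ := (hker (btil * x - x * btil)).mp (by
    rw [map_sub, map_mul, map_mul, hbcomm.comm (π x), sub_self])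
  have e1 : h * (c * x - x * c)
      = (atil * btil - btil * atil) * x - x * (atil * btil - btil * atil) := by
    rw [mul_sub, ← mul_assoc h c x, ← mul_assoc h x c, hcen x, mul_assoc x h c, ← hc]
  have e2 : h * (atil * t + s * btil - (btil * s + t * atil))
      = (atil * btil - btil * atil) * x - x * (atil * btil - btil * atil) := by
    rw [mul_sub, mul_add, mul_add, ← mul_assoc h atil t, hcen atil, mul_assoc atil h t,
      ← mul_assoc h s btil, ← mul_assoc h btil s, hcen btil, mul_assoc btil h s,
      ← mul_assoc h t atil, ← hs, ← ht]
    noncomm_ring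
  have hπinner : π (atil * t + s * btil - (btil * s + t * atil)) = 0 := by
    simp only [map_sub, map_add, map_mul]
    rw [hacomm.comm (π t), hbcomm.comm (π s)]
    abel
  obtain ⟨y, hy⟩ := (hker _).mp hπinner
  have hh2 : h * h = 0 := (hann h).mpr ⟨1, (mul_one h).symm⟩
  have hzero : h * (c * x - x * c) = 0 := by
    rw [e1, ← e2, hy, ← mul_assoc, hh2, zero_mul]
  have : π (c * x - x * c) = 0 := (hker _).mpr ((hann _).mp hzero)
  rw [map_sub, map_mul, map_mul, sub_eq_zero] at this
  exact this.symm
end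

section
/- Let A be a ring which is an Azumaya algebra over its center Z, and let (A', h, π) be a first order deformation of A. Then the set S = { s ∈ A' : π(s) ∈ Z and π(s) is a non-zero-divisor in Z } of all lifts of the regular elements of Z is a multiplicatively closed subset of A' satisfying both the left and the right Ore conditions in A'. -/
open scoped TensorProduct

/-- The natural map `A ⊗[Z] Aᵐᵒᵖ → End_Z(A)`, `a ⊗ b ↦ (c ↦ a·c·b)`. -/
noncomputable def azumayaMap (Z A : Type*) [CommRing Z] [Ring A] [Algebra Z A] :
    A ⊗[Z] Aᵐᵒᵖ →ₗ[Z] Module.End Z A :=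
  TensorProduct.lift <| LinearMap.mk₂ Z
    (fun a b => (LinearMap.mulLeft Z a) ∘ₗ (LinearMap.mulRight Z b.unop))
    (fun a a' b => by ext c; simp [add_mul])
    (fun z a b => by ext c; simp [smul_mul_assoc])
    (fun a b b' => by ext c; simp [mul_add])
    (fun z a b => by ext c; simp [mul_smul_comm])

/-- `A` is an Azumaya algebra over `Z`: a faithful finitely generated projective `Z`-module
such that the natural map `A ⊗[Z] Aᵐᵒᵖ → End_Z(A)` is an isomorphism. -/
def IsAzumayaOver (Z A : Type*) [CommRing Z] [Ring A] [Algebra Z A] : Prop :=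
  FaithfulSMul Z A ∧ Module.Finite Z A ∧ Module.Projective Z A ∧
    Function.Bijective (azumayaMap Z A)

/-- If `A` is an Azumaya algebra over its center `Z` and `(A', h, π)` is a first order
deformation of `A`, then the set of all lifts of the regular elements of `Z` is a
multiplicatively closed subset of `A'` satisfying the left and the right Ore conditions. -/
theorem lifts_of_regular_elements_ore {A' A : Type*} [Ring A'] [Ring A]
    (h : A') (π : A' →+* A) (hdef : IsFirstOrderDeformation h π)
    (haz : IsAzumayaOver (Subring.center A) A) :
    letI S : Set A' := {s : A' | ∃ z : Subring.center A,
      z ∈ nonZeroDivisors (Subring.center A) ∧ π s = (z : A)}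
    (1 ∈ S) ∧
    (∀ s ∈ S, ∀ t ∈ S, s * t ∈ S) ∧
    (∀ (r : A'), ∀ s ∈ S, ∃ (r' : A'), ∃ s' ∈ S, s' * r = r' * s) ∧
    (∀ (r : A'), ∀ s ∈ S, ∃ (r' : A'), ∃ s' ∈ S, r * s' = s * r') := by
  obtain ⟨hcen, hsurj, hker, hann⟩ := hdef
  -- Key fact: `h * x` only depends on `π x`.
  have key : ∀ x y : A', π x = π y → h * x = h * y := by
    intro x y hxy
    have h0 : π (x - y) = 0 := by rw [map_sub, hxy, sub_self]
    obtain ⟨c, hc⟩ := (hker _).mp h0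
    have hz : h * (x - y) = 0 := by
      rw [hc]; exact (hann _).mpr ⟨c, rfl⟩
    rw [mul_sub] at hz
    exact sub_eq_zero.mp hz
  refine ⟨⟨1, one_mem _, by simp⟩, ?_, ?_, ?_⟩
  · rintro s ⟨z, hz, hs⟩ t ⟨w, hw, ht⟩
    exact ⟨z * w, mul_mem hz hw, by rw [map_mul, hs, ht]; rfl⟩
  · -- left Ore
    rintro r s ⟨z, hz, hs⟩
    have hcomm : ∀ g : A, g * (z : A) = (z : A) * g := fun g =>
      Subring.mem_center_iff.mp z.2 g
    have h0 : π (s * r - r * s) = 0 := by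
      rw [map_sub, map_mul, map_mul, hs, hcomm (π r), sub_self]
    obtain ⟨a, ha⟩ := (hker _).mp h0
    have hsa : h * (s * a) = h * (a * s) :=
      key _ _ (by rw [map_mul, map_mul, hs, hcomm (π a)])
    have hsr : s * r = r * s + h * a := by rw [← ha]; noncomm_ring
    have hsh : s * (h * a) = h * (s * a) := by
      rw [← mul_assoc, ← hcen s, mul_assoc]
    refine ⟨r * s + h * a + h * a, s * s,
      ⟨z * z, mul_mem hz hz, by rw [map_mul, hs]; rfl⟩, ?_⟩
    calc s * s * r = s * (r * s + h * a) := by rw [mul_assoc, hsr]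
      _ = s * r * s + h * (s * a) := by rw [mul_add, hsh, ← mul_assoc]
      _ = (r * s + h * a) * s + h * (s * a) := by rw [hsr]
      _ = r * s * s + h * (a * s) + h * (a * s) := by rw [hsa]; noncomm_ring
      _ = (r * s + h * a + h * a) * s := by noncomm_ring
  · -- right Ore
    rintro r s ⟨z, hz, hs⟩
    have hcomm : ∀ g : A, g * (z : A) = (z : A) * g := fun g =>
      Subring.mem_center_iff.mp z.2 g
    have h0 : π (s * r - r * s) = 0 := by
      rw [map_sub, map_mul, map_mul, hs, hcomm (π r), sub_self]
    obtain ⟨a, ha⟩ := (hker _).mp h0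
    have hsa : h * (s * a) = h * (a * s) :=
      key _ _ (by rw [map_mul, map_mul, hs, hcomm (π a)])
    have hrs : r * s = s * r - h * a := by rw [← ha]; noncomm_ring
    have hsh : s * (h * a) = h * (s * a) := by
      rw [← mul_assoc, ← hcen s, mul_assoc]
    refine ⟨s * r - h * a - h * a, s * s,
      ⟨z * z, mul_mem hz hz, by rw [map_mul, hs]; rfl⟩, ?_⟩
    calc r * (s * s) = (s * r - h * a) * s := by rw [← mul_assoc, hrs]
      _ = s * (r * s) - h * (a * s) := by noncomm_ring
      _ = s * (s * r - h * a) - h * (a * s) := by rw [hrs]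
      _ = s * s * r - h * (s * a) - h * (a * s) := by rw [mul_sub, hsh]; noncomm_ring
      _ = s * s * r - h * (s * a) - h * (s * a) := by rw [hsa]
      _ = s * (s * r - h * a - h * a) := by rw [mul_sub, mul_sub, hsh]; noncomm_ring
end

section
/- Let Z be a commutative ring, r ≥ 1 an integer, and let (A', h, π) be a first order deformation of the matrix ring M_r(Z). Then there exist a ring Z', a central element h' ∈ Z', a surjective ring homomorphism π₀ : Z' → Z making (Z', h', π₀) a first order deformation of Z, and a ring isomorphism φ : M_r(Z') → A' such that φ(h'·1) = h and π ∘ φ = M_r(π₀) (the entrywise application of π₀). (The ring Z' need not be commutative.) -/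
/-!
The kernel `hA'` of `π` squares to zero, so the standard matrix units of `M_r(Z)` lift to a
complete system of matrix units `E i j` of `A'`. A ring with a complete system of matrix units
is the matrix ring over the corner `e A' e`, `e = E i₀ i₀`, via `X ↦ ∑ E i i₀ * X i j * E i₀ j`.
So take `Z' = e A' e`, `h' = e h e` and `π₀` the `(i₀, i₀)` entry of `π` on `Z'`: as `h` is
central it corresponds to the scalar matrix `h' • 1`, and the deformation conditions for `h'`
are those for `h` cut down by `e`.
-/

universe u v

open Matrix

namespace IsIdempotentElem

variable {R : Type*} {e : R}

def toCorner [Semigroup R] (he : IsIdempotentElem e) (a : R) : he.Corner :=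
  ⟨e * a * e, a, rfl⟩

theorem Corner.mul_val_mul [Semigroup R] (he : IsIdempotentElem e) (z : he.Corner) :
    e * z.1 * e = z.1 := by
  obtain ⟨hl, hr⟩ := (Subsemigroup.mem_corner_iff he).1 z.2
  rw [hl, hr]

theorem Corner.val_sum [NonUnitalSemiring R] (he : IsIdempotentElem e) {κ : Type*}
    (s : Finset κ) (f : κ → he.Corner) : (∑ k ∈ s, f k).1 = ∑ k ∈ s, (f k).1 :=
  map_sum (NonUnitalSubsemiring.corner e).subtype f s

theorem val_toCorner_mul [Semiring R] (he : IsIdempotentElem e) {a : R}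
    (ha : ∀ x, a * x = x * a) (z : he.Corner) : (he.toCorner a * z).1 = a * z.1 := by
  obtain ⟨hl, -⟩ := (Subsemigroup.mem_corner_iff he).1 z.2
  change e * a * e * z.1 = a * z.1
  rw [mul_assoc _ e, hl, ← ha e, mul_assoc, hl]

theorem val_mul_toCorner [Semiring R] (he : IsIdempotentElem e) {a : R}
    (ha : ∀ x, a * x = x * a) (z : he.Corner) : (z * he.toCorner a).1 = a * z.1 := by
  obtain ⟨-, hr⟩ := (Subsemigroup.mem_corner_iff he).1 z.2
  change z.1 * (e * a * e) = a * z.1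
  rw [← mul_assoc, ← mul_assoc, hr, mul_assoc, ha e, ← mul_assoc, hr, ha]

end IsIdempotentElem

section CornerEntry

variable {A : Type*} [Semiring A] {R : Type*} [Semiring R] {ι : Type*} [Fintype ι]
  [DecidableEq ι] (π : A →+* Matrix ι ι R) {e : A} (he : IsIdempotentElem e) {i : ι}
  (hπe : π e = single i i 1)
include hπe

theorem RingHom.map_val_corner_eq_single (z : he.Corner) : π z.1 = single i i (π z.1 i i) :=
  calc π z.1 = π (e * z.1 * e) := by rw [IsIdempotentElem.Corner.mul_val_mul he z]
    _ = single i i (π z.1 i i) := by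
      rw [map_mul, map_mul, hπe, single_mul_mul_single, one_mul, mul_one]

def RingHom.cornerEntry : he.Corner →+* R where
  toFun z := π z.1 i i
  map_one' := by
    change π e i i = 1
    rw [hπe, single_apply_same]
  map_mul' a b := by
    change π (a.1 * b.1) i i = π a.1 i i * π b.1 i i
    conv_lhs => rw [map_mul, π.map_val_corner_eq_single he hπe a,
      π.map_val_corner_eq_single he hπe b, single_mul_single_same, single_apply_same]
  map_zero' := by
    change π 0 i i = 0
    rw [map_zero, Matrix.zero_apply]
  map_add' a b := by
    change π (a.1 + b.1) i i = π a.1 i i + π b.1 i i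
    rw [map_add, Matrix.add_apply]

theorem RingHom.cornerEntry_apply (z : he.Corner) : π.cornerEntry he hπe z = π z.1 i i :=
  rfl

end CornerEntry

section MatrixUnits

variable {A : Type*} [Semiring A] {ι : Type*} [Fintype ι] [DecidableEq ι]

structure IsMatrixUnits (E : ι → ι → A) : Prop where
  mul_eq : ∀ i j k l, E i j * E k l = if j = k then E i l else 0
  sum_diag : ∑ i, E i i = 1

theorem isIdempotentElem_sum_diag_of_mul_eq {E : ι → ι → A}
    (hE : ∀ i j k l, E i j * E k l = if j = k then E i l else 0) :
    IsIdempotentElem (∑ i, E i i) := by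
  simp [IsIdempotentElem, Finset.sum_mul_sum, hE]

theorem Matrix.isMatrixUnits_single (R : Type*) [Semiring R] :
    IsMatrixUnits fun i j : ι ↦ single i j (1 : R) where
  mul_eq i j k l := by
    split_ifs with hjk
    · rw [hjk, single_mul_single_same, one_mul]
    · exact single_mul_single_of_ne (h := hjk) ..
  sum_diag := by
    ext a b
    rw [Matrix.sum_apply, Finset.sum_eq_single a] <;> simp +contextual [single_apply, one_apply]

namespace IsMatrixUnits

variable {E : ι → ι → A} (hE : IsMatrixUnits E)
include hE

theorem mul_same (i j l : ι) : E i j * E j l = E i l := by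
  simp [hE.mul_eq]

theorem isIdempotentElem (i : ι) : IsIdempotentElem (E i i) :=
  hE.mul_same i i i

theorem mul_mul_mul (i j k l m n p q : ι) (x : A) :
    E i j * (E k l * x * E m n) * E p q = if j = k ∧ n = p then E i l * x * E m q else 0 := by
  rw [show E i j * (E k l * x * E m n) * E p q = E i j * E k l * x * (E m n * E p q) by
    simp only [mul_assoc], hE.mul_eq, hE.mul_eq]
  split_ifs <;> simp_all

theorem sum_mul_eq_one (i₀ : ι) : ∑ k, E k i₀ * E i₀ k = 1 := by
  simp only [hE.mul_same, hE.sum_diag]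

def entry (i₀ : ι) (a : A) (i j : ι) : (hE.isIdempotentElem i₀).Corner :=
  ⟨E i₀ i * a * E j i₀, E i₀ i * a * E j i₀, by
    simpa using hE.mul_mul_mul i₀ i₀ i₀ i j i₀ i₀ i₀ a⟩

theorem val_entry (i₀ : ι) (a : A) (i j : ι) : (hE.entry i₀ a i j).1 = E i₀ i * a * E j i₀ :=
  rfl

def toMatrix (i₀ : ι) : A →+* Matrix ι ι (hE.isIdempotentElem i₀).Corner where
  toFun a := of (hE.entry i₀ a)
  map_one' := by
    ext i j : 1
    refine Subtype.ext ?_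
    rw [of_apply, val_entry, mul_one, hE.mul_eq, one_apply]
    split_ifs <;> rfl
  map_mul' a b := by
    ext i j : 1
    refine Subtype.ext ?_
    simp only [of_apply, mul_apply, IsIdempotentElem.Corner.val_sum]
    calc E i₀ i * (a * b) * E j i₀ = E i₀ i * a * (∑ k, E k i₀ * E i₀ k) * b * E j i₀ := by
          simp only [hE.sum_mul_eq_one, mul_one, mul_assoc]
      _ = ∑ k, E i₀ i * a * E k i₀ * (E i₀ k * b * E j i₀) := by
          simp only [Finset.mul_sum, Finset.sum_mul, mul_assoc]
  map_zero' := by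
    ext i j : 1
    exact Subtype.ext <| by
      change E i₀ i * 0 * E j i₀ = 0
      rw [mul_zero, zero_mul]
  map_add' a b := by
    ext i j : 1
    exact Subtype.ext <| by
      change E i₀ i * (a + b) * E j i₀ = E i₀ i * a * E j i₀ + E i₀ i * b * E j i₀
      rw [mul_add, add_mul]

def toMatrixEquiv (i₀ : ι) : A ≃+* Matrix ι ι (hE.isIdempotentElem i₀).Corner where
  __ := hE.toMatrix i₀
  invFun X := ∑ i, ∑ j, E i i₀ * (X i j).1 * E i₀ j
  left_inv a := by
    change ∑ i, ∑ j, E i i₀ * (E i₀ i * a * E j i₀) * E i₀ j = a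
    calc ∑ i, ∑ j, E i i₀ * (E i₀ i * a * E j i₀) * E i₀ j = ∑ i, ∑ j, E i i * a * E j j := by
          simp only [hE.mul_mul_mul, and_self, if_true]
      _ = (∑ i, E i i) * a * ∑ j, E j j := by
          simp only [Finset.sum_mul, Finset.mul_sum]
          exact Finset.sum_comm
      _ = a := by rw [hE.sum_diag, one_mul, mul_one]
  right_inv X := by
    ext k l : 1
    refine Subtype.ext ?_
    change E i₀ k * (∑ i, ∑ j, E i i₀ * (X i j).1 * E i₀ j) * E l i₀ = (X k l).1
    simp only [Finset.mul_sum, Finset.sum_mul, hE.mul_mul_mul, ite_and, Finset.sum_ite_irrel,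
      Finset.sum_ite_eq, Finset.sum_ite_eq', Finset.mem_univ, if_true, Finset.sum_const_zero,
      IsIdempotentElem.Corner.mul_val_mul]

theorem toMatrixEquiv_symm_apply (i₀ : ι) (X : Matrix ι ι (hE.isIdempotentElem i₀).Corner) :
    (hE.toMatrixEquiv i₀).symm X = ∑ i, ∑ j, E i i₀ * (X i j).1 * E i₀ j :=
  rfl

theorem toMatrixEquiv_symm_toCorner_smul_one {a : A} (ha : ∀ x, a * x = x * a) (i₀ : ι) :
    (hE.toMatrixEquiv i₀).symm ((hE.isIdempotentElem i₀).toCorner a • 1) = a := by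
  have hentry : ∀ i j, E i i₀ * (((hE.isIdempotentElem i₀).toCorner a • 1 :
      Matrix ι ι (hE.isIdempotentElem i₀).Corner) i j).1 * E i₀ j =
        if i = j then a * E i i else 0 := by
    intro i j
    rw [Matrix.smul_apply, Matrix.one_apply]
    split_ifs with hij
    · rw [smul_eq_mul, mul_one, hij]
      change E j i₀ * (E i₀ i₀ * a * E i₀ i₀) * E i₀ j = a * E j j
      simp only [hE.mul_mul_mul, and_self, if_true]
      rw [← ha, mul_assoc, hE.mul_same]
    · rw [smul_zero]
      change E i i₀ * 0 * E i₀ j = 0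
      rw [mul_zero, zero_mul]
  simp only [toMatrixEquiv_symm_apply, hentry, Finset.sum_ite_eq, Finset.mem_univ, if_true,
    ← Finset.mul_sum, hE.sum_diag, mul_one]

theorem map_toMatrixEquiv_symm {R : Type*} [Semiring R] (π : A →+* Matrix ι ι R)
    (hπE : ∀ i j, π (E i j) = single i j 1) (i₀ : ι)
    (X : Matrix ι ι (hE.isIdempotentElem i₀).Corner) :
    π ((hE.toMatrixEquiv i₀).symm X) =
      (π.cornerEntry (hE.isIdempotentElem i₀) (hπE i₀ i₀)).mapMatrix X := by
  rw [toMatrixEquiv_symm_apply, map_sum, matrix_eq_sum_single (RingHom.mapMatrix _ X)]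
  refine Finset.sum_congr rfl fun i _ ↦ ?_
  rw [map_sum]
  refine Finset.sum_congr rfl fun j _ ↦ ?_
  rw [map_mul, map_mul, hπE, hπE, π.map_val_corner_eq_single _ (hπE i₀ i₀),
    single_mul_single_same, single_mul_single_same, one_mul, mul_one]
  rfl

end IsMatrixUnits

end MatrixUnits

section Lifting

variable {A B : Type*} [Ring A] [Ring B] {π : A →+* B}
  (hsq : ∀ x y, π x = 0 → π y = 0 → x * y = 0)
include hsq

theorem eq_one_of_isIdempotentElem_of_map_eq_one {f : A} (hf : IsIdempotentElem f)
    (hπf : π f = 1) : f = 1 := by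
  have hπ : π (1 - f) = 0 := by rw [map_sub, map_one, hπf, sub_self]
  exact (sub_eq_zero.1 (hf.one_sub.eq.symm.trans (hsq _ _ hπ hπ))).symm

/-- The defects `c i j = v i * u j - δ i j e` lie in the square-zero kernel, so one correction
`w i = v i - ∑ k, c i k * v k` removes them exactly. -/
theorem exists_lift_mul_eq_ite {ι : Type*} [Fintype ι] [DecidableEq ι] {e : A}
    (he : IsIdempotentElem e) (u v : ι → A) (hu : ∀ i, u i * e = u i)
    (hvu : ∀ i j, π (v i * u j) = π (if i = j then e else 0)) :
    ∃ w : ι → A, (∀ i, π (w i) = π (v i)) ∧ ∀ i j, w i * u j = if i = j then e else 0 := by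
  set c : ι → ι → A := fun i j ↦ v i * u j - if i = j then e else 0 with hc
  have hvu_eq : ∀ i j, v i * u j = (if i = j then e else 0) + c i j := fun i j ↦ by
    rw [hc, add_sub_cancel]
  have hπc : ∀ i j, π (c i j) = 0 := fun i j ↦ by rw [hc, map_sub, hvu, sub_self]
  have hce : ∀ i j, c i j * e = c i j := fun i j ↦ by
    simp only [hc, sub_mul, mul_assoc, hu, ite_mul, he.eq, zero_mul]
  have hcu : ∀ i k j, c i k * (v k * u j) = if k = j then c i j else 0 := fun i k j ↦ by
    rw [hvu_eq, mul_add, hsq _ _ (hπc i k) (hπc k j), add_zero, mul_ite, mul_zero]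
    split_ifs with hkj
    · rw [hkj, hce]
    · rfl
  refine ⟨fun i ↦ v i - ∑ k, c i k * v k, fun i ↦ ?_, fun i j ↦ ?_⟩
  · simp only [map_sub, map_sum, map_mul, hπc, zero_mul, Finset.sum_const_zero, sub_zero]
  · simp only [sub_mul, Finset.sum_mul, mul_assoc, hcu, Finset.sum_ite_eq', Finset.mem_univ,
      if_true]
    rw [hvu_eq, add_sub_cancel_right]

theorem IsMatrixUnits.exists_lift {ι : Type*} [Fintype ι] [DecidableEq ι] [Nonempty ι]
    (hπ : Function.Surjective π) {E : ι → ι → B} (hE : IsMatrixUnits E) :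
    ∃ E' : ι → ι → A, IsMatrixUnits E' ∧ ∀ i j, π (E' i j) = E i j := by
  obtain ⟨i₀⟩ := ‹Nonempty ι›
  obtain ⟨e, he, hπe⟩ := exists_isIdempotentElem_eq_of_ker_isNilpotent π
    (fun x hx ↦ ⟨2, by rw [pow_two]; exact hsq x x hx hx⟩) (E i₀ i₀) (hπ _)
    (hE.isIdempotentElem i₀)
  choose x hx using fun i ↦ hπ (E i i₀)
  choose v hv using fun i ↦ hπ (E i₀ i)
  set u : ι → A := fun i ↦ x i * e with hu_def
  have hu : ∀ i, u i * e = u i := fun i ↦ by rw [hu_def, mul_assoc, he.eq]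
  have hπu : ∀ i, π (u i) = E i i₀ := fun i ↦ by rw [hu_def, map_mul, hx, hπe, hE.mul_same]
  obtain ⟨w, hπw, hwu⟩ := exists_lift_mul_eq_ite hsq he u v hu fun i j ↦ by
    rw [map_mul, hv, hπu, hE.mul_eq, apply_ite π, hπe, map_zero]
  have hmul : ∀ i j k l, u i * w j * (u k * w l) = if j = k then u i * w l else 0 :=
    fun i j k l ↦ by
      rw [mul_assoc, ← mul_assoc (w j), hwu]
      split_ifs
      · rw [← mul_assoc, hu]
      · rw [zero_mul, mul_zero]
  have hπE : ∀ i j, π (u i * w j) = E i j := fun i j ↦ by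
    rw [map_mul, hπu, hπw, hv, hE.mul_same]
  refine ⟨fun i j ↦ u i * w j, ⟨hmul, ?_⟩, hπE⟩
  refine eq_one_of_isIdempotentElem_of_map_eq_one hsq
    (isIdempotentElem_sum_diag_of_mul_eq hmul) ?_
  rw [map_sum]
  simp only [hπE, hE.sum_diag]

end Lifting

section Deformation

variable {A : Type*} [Ring A] {h : A}

theorem IsFirstOrderDeformation.mul_eq_zero_of_map_eq_zero {B : Type*} [Ring B] {π : A →+* B}
    (hdef : IsFirstOrderDeformation h π) {x y : A} (hx : π x = 0) (hy : π y = 0) :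
    x * y = 0 := by
  obtain ⟨hc, -, hker, hann⟩ := hdef
  obtain ⟨a, rfl⟩ := (hker x).1 hx
  obtain ⟨b, rfl⟩ := (hker y).1 hy
  have hh : h * h = 0 := (hann h).2 ⟨1, (mul_one h).symm⟩
  calc h * a * (h * b) = h * h * (a * b) := by
        rw [mul_assoc, ← mul_assoc a, ← hc a]
        noncomm_ring
    _ = 0 := by rw [hh, zero_mul]

theorem IsFirstOrderDeformation.corner {R : Type*} [Ring R] {ι : Type*} [Fintype ι]
    [DecidableEq ι] {π : A →+* Matrix ι ι R} (hdef : IsFirstOrderDeformation h π) {e : A}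
    (he : IsIdempotentElem e) {i : ι} (hπe : π e = single i i 1) :
    IsFirstOrderDeformation (he.toCorner h) (π.cornerEntry he hπe) := by
  obtain ⟨hc, hsurj, hker, hann⟩ := hdef
  have hmem : ∀ z : he.Corner, (∃ y, z = he.toCorner h * y) ↔ ∃ y, z.1 = h * y := by
    refine fun z ↦ ⟨fun ⟨y, hy⟩ ↦ ⟨y.1, by rw [hy, he.val_toCorner_mul hc]⟩, fun ⟨y, hy⟩ ↦ ?_⟩
    refine ⟨he.toCorner y, Subtype.ext ?_⟩
    calc z.1 = e * z.1 * e := (IsIdempotentElem.Corner.mul_val_mul he z).symm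
      _ = h * (e * y * e) := by rw [hy, ← mul_assoc, ← hc e, mul_assoc h, mul_assoc h]
      _ = (he.toCorner h * he.toCorner y).1 :=
        (he.val_toCorner_mul hc (he.toCorner y)).symm
  refine ⟨fun z ↦ Subtype.ext ?_, fun c ↦ ?_, fun z ↦ ?_, fun z ↦ ?_⟩
  · rw [he.val_toCorner_mul hc, he.val_mul_toCorner hc]
  · obtain ⟨a, ha⟩ := hsurj (single i i c)
    refine ⟨he.toCorner a, ?_⟩
    change π (e * a * e) i i = c
    rw [map_mul, map_mul, hπe, ha, single_mul_mul_single, one_mul, mul_one, single_apply_same,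
      single_apply_same]
  · rw [hmem, ← hker, RingHom.cornerEntry_apply]
    refine ⟨fun h0 ↦ ?_, fun h0 ↦ by rw [h0, Matrix.zero_apply]⟩
    rw [π.map_val_corner_eq_single he hπe, h0, single_zero]
  · rw [hmem, ← hann, ← he.val_toCorner_mul hc]
    exact ⟨fun h0 ↦ by rw [h0]; rfl, fun h0 ↦ Subtype.ext (a2 := (0 : he.Corner)) h0⟩

end Deformation

/-- Any first order deformation of a matrix ring `M_r(Z)` is, compatibly, a matrix ring
`M_r(Z')` over a first order deformation `Z'` of `Z` (with `Z'` not necessarily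
commutative). -/
theorem matrix_deformation_splits {Z : Type u} [CommRing Z] {A' : Type v} [Ring A']
    (r : ℕ) (hr : 1 ≤ r)
    (h : A') (π : A' →+* Matrix (Fin r) (Fin r) Z)
    (hdef : IsFirstOrderDeformation h π) :
    ∃ (Z' : Type v) (_ : Ring Z') (h' : Z') (π₀ : Z' →+* Z),
      IsFirstOrderDeformation h' π₀ ∧
      ∃ φ : Matrix (Fin r) (Fin r) Z' ≃+* A',
        φ (h' • (1 : Matrix (Fin r) (Fin r) Z')) = h ∧
        ∀ X : Matrix (Fin r) (Fin r) Z', π (φ X) = π₀.mapMatrix X := by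
  let i₀ : Fin r := ⟨0, hr⟩
  have : Nonempty (Fin r) := ⟨i₀⟩
  obtain ⟨hcentral, hsurj, -⟩ := id hdef
  obtain ⟨E, hE, hπE⟩ := (isMatrixUnits_single Z).exists_lift
    (fun _ _ ↦ hdef.mul_eq_zero_of_map_eq_zero) hsurj
  have he := hE.isIdempotentElem i₀
  exact ⟨he.Corner, inferInstance, he.toCorner h, π.cornerEntry he (hπE i₀ i₀),
    hdef.corner he (hπE i₀ i₀), (hE.toMatrixEquiv i₀).symm,
    hE.toMatrixEquiv_symm_toCorner_smul_one hcentral i₀, hE.map_toMatrixEquiv_symm π hπE i₀⟩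
end

section
/- Let Z be a ring, (Z', h, π₀) a first order deformation of Z, and r ≥ 1. Let M₀ be a left Z-module and let M = M₀^r be the column module over M_r(Z). If M' is a first order deformation of M over the induced first order deformation (M_r(Z'), h·1, M_r(π₀)) of M_r(Z), then there exists a left Z'-module M₀' which is a first order Z'-deformation of M₀ and an isomorphism of M_r(Z')-modules M' ≅ (M₀')^r compatible with the given identifications modulo h. -/
/-!
Morita theory for `M_r(Z')`: a module `M'` over the matrix ring is the column module of its
corner `N = E₁₁ M'`, via `x ↦ (E₁ᵢ x)ᵢ`. Since `E₁₁` commutes with `h·1`, every element of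
`h M'` lying in `N` already lies in `h N`, so the conditions `ker q = h M'` and
`{x | h x = 0} = h M'` restrict to `N`; hence `N`, with the first coordinate of `q`, is a
first order deformation of `M₀`.
-/

universe u v w x

/-- Given a first order deformation `(A', h, π)` of `A`, an `A`-module `M` and an
`A'`-module `M'`, the additive map `q : M' → M` exhibits `M'` as a first order
`A'`-deformation of `M`: `q` is surjective and `π`-equivariant, its kernel is `h·M'`
(so `M'/hM' ≅ M`), and the annihilator of `h` in `M'` is `h·M'`. -/
def IsModuleDeformation {A' A : Type*} [Ring A'] [Ring A] (h : A') (π : A' →+* A)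
    {M' M : Type*} [AddCommGroup M'] [Module A' M'] [AddCommGroup M] [Module A M]
    (q : M' →+ M) : Prop :=
  Function.Surjective q ∧
  (∀ (a : A') (x : M'), q (a • x) = π a • q x) ∧
  (∀ x : M', q x = 0 ↔ ∃ y : M', x = h • y) ∧
  (∀ x : M', h • x = 0 ↔ ∃ y : M', x = h • y)

section ColumnModule

variable {R M : Type*} [Ring R] [AddCommGroup M] [Module R M] {r : ℕ}

/-- The action of a square matrix on a column vector with entries in a module. -/
instance matrixColSMul : SMul (Matrix (Fin r) (Fin r) R) (Fin r → M) :=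
  ⟨fun A v i => ∑ j, A i j • v j⟩

theorem matrixCol_smul_def (A : Matrix (Fin r) (Fin r) R) (v : Fin r → M) (i : Fin r) :
    (A • v) i = ∑ j, A i j • v j := rfl

/-- The column module `M^r` over the matrix ring `M_r(R)`. -/
instance matrixColModule : Module (Matrix (Fin r) (Fin r) R) (Fin r → M) where
  one_smul v := funext fun i => by
    simp [matrixCol_smul_def, Matrix.one_apply, ite_smul]
  mul_smul A B v := funext fun i => by
    simp only [matrixCol_smul_def, Matrix.mul_apply, Finset.sum_smul, Finset.smul_sum, mul_smul]
    exact Finset.sum_comm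
  smul_zero A := funext fun i => by simp [matrixCol_smul_def]
  smul_add A u v := funext fun i => by simp [matrixCol_smul_def, Finset.sum_add_distrib]
  add_smul A B v := funext fun i => by
    simp [matrixCol_smul_def, Matrix.add_apply, add_smul, Finset.sum_add_distrib]
  zero_smul v := funext fun i => by simp [matrixCol_smul_def]

end ColumnModule

open Matrix MatrixModCat

namespace MatrixModCat

variable {R : Type*} [Ring R] {ι : Type*} [Fintype ι] [DecidableEq ι]
  {M : Type*} [AddCommGroup M] [Module (Matrix ι ι R) M] [Module R M]
  [IsScalarTower R (Matrix ι ι R) M]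

theorem single_one_smul_of_mem_toModuleCatObj {i : ι} {v : M} (hv : v ∈ toModuleCatObj R M i) :
    single i i (1 : R) • v = v := by
  obtain ⟨y, rfl⟩ := (mem_toModuleCatObj i).1 hv
  rw [← mul_smul, single_mul_single_same, mul_one]

theorem single_one_smul_mem_toModuleCatObj (i : ι) (y : M) :
    single i i (1 : R) • y ∈ toModuleCatObj R M i :=
  ⟨y, rfl⟩

theorem single_one_smul_smul_comm (i : ι) (c : R) (y : M) :
    single i i (1 : R) • c • y = c • single i i (1 : R) • y := by
  rw [← smul_one_smul (Matrix ι ι R) c y, ← smul_one_smul (Matrix ι ι R) c (_ • y),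
    ← mul_smul, ← mul_smul]
  congr 1
  ext a b
  simp [smul_one_eq_diagonal, mul_diagonal, diagonal_mul, Matrix.single]

theorem exists_eq_smul_toModuleCatObj_iff {i : ι} (v : toModuleCatObj R M i) (c : R) :
    (∃ y : M, (v : M) = c • y) ↔ ∃ y : toModuleCatObj R M i, v = c • y := by
  constructor
  · rintro ⟨y, hy⟩
    refine ⟨⟨_, single_one_smul_mem_toModuleCatObj i y⟩, Subtype.ext ?_⟩
    rw [SetLike.val_smul, ← single_one_smul_smul_comm, ← hy,
      single_one_smul_of_mem_toModuleCatObj v.2]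
  · rintro ⟨y, rfl⟩
    exact ⟨y, rfl⟩

end MatrixModCat

section Deformation

variable {R S : Type*} [Ring R] [Ring S] {π : R →+* S} {r : ℕ}
  {M' : Type*} [AddCommGroup M'] [Module (Matrix (Fin r) (Fin r) R) M']
  {M : Type*} [AddCommGroup M] [Module S M] {q : M' →+ (Fin r → M)}

theorem map_single_smul_of_equivariant
    (hq : ∀ (a : Matrix (Fin r) (Fin r) R) (x : M'), q (a • x) = π.mapMatrix a • q x)
    (i j : Fin r) (c : R) (x : M') :
    q (single i j c • x) = Pi.single i (π c • q x j) := by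
  rw [hq, RingHom.mapMatrix_apply, map_single, Matrix.Module.single_smul]

variable [Module R M'] [IsScalarTower R (Matrix (Fin r) (Fin r) R) M']

variable (R) in
def toModuleCatObjComponent (q : M' →+ (Fin r → M)) (i : Fin r) :
    toModuleCatObj R M' i →+ M :=
  (Pi.evalAddMonoidHom (fun _ => M) i).comp
    (q.comp (toModuleCatObj R M' i).subtype.toAddMonoidHom)

theorem toModuleCatObjComponent_apply (i : Fin r) (v : toModuleCatObj R M' i) :
    toModuleCatObjComponent R q i v = q v i := rfl

theorem map_smul_of_equivariant
    (hq : ∀ (a : Matrix (Fin r) (Fin r) R) (x : M'), q (a • x) = π.mapMatrix a • q x)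
    (c : R) (x : M') : q (c • x) = π c • q x := by
  rw [← smul_one_smul (Matrix (Fin r) (Fin r) R) c x, hq, smul_one_eq_diagonal,
    RingHom.mapMatrix_apply, diagonal_map π.map_zero, Matrix.Module.diagonal_const_smul]

theorem map_eq_pi_single_of_mem_toModuleCatObj
    (hq : ∀ (a : Matrix (Fin r) (Fin r) R) (x : M'), q (a • x) = π.mapMatrix a • q x)
    {i : Fin r} {v : M'} (hv : v ∈ toModuleCatObj R M' i) : q v = Pi.single i (q v i) := by
  conv_lhs => rw [← single_one_smul_of_mem_toModuleCatObj hv,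
    map_single_smul_of_equivariant hq, map_one, one_smul]

theorem isModuleDeformation_toModuleCatObjComponent {h : R}
    (hq : IsModuleDeformation (h • (1 : Matrix (Fin r) (Fin r) R)) π.mapMatrix q) (i : Fin r) :
    IsModuleDeformation h π (toModuleCatObjComponent R q i) := by
  obtain ⟨hsurj, hequiv, hker, hann⟩ := hq
  simp only [smul_one_smul] at hker hann
  refine ⟨fun m => ?_, fun a v => ?_, fun v => ?_, fun v => ?_⟩
  · obtain ⟨x, hx⟩ := hsurj (Pi.single i m)
    refine ⟨⟨_, single_one_smul_mem_toModuleCatObj i x⟩, ?_⟩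
    simp [toModuleCatObjComponent_apply, map_single_smul_of_equivariant hequiv, hx]
  · exact congrFun (map_smul_of_equivariant hequiv a v) i
  · rw [← exists_eq_smul_toModuleCatObj_iff v h, ← hker,
      map_eq_pi_single_of_mem_toModuleCatObj hequiv v.2, Pi.single_eq_zero_iff,
      toModuleCatObjComponent_apply]
  · rw [← exists_eq_smul_toModuleCatObj_iff v h, ← hann, ← Submodule.coe_eq_zero,
      SetLike.val_smul]

end Deformation

theorem column_module_deformation_splits_general {Z' : Type u} {Z : Type v} [Ring Z'] [Ring Z]
    (h : Z') (π₀ : Z' →+* Z)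
    (r : ℕ) (hr : 1 ≤ r)
    (M₀ : Type w) [AddCommGroup M₀] [Module Z M₀]
    (M' : Type x) [AddCommGroup M'] [Module (Matrix (Fin r) (Fin r) Z') M']
    (q : M' →+ (Fin r → M₀))
    (hq : IsModuleDeformation (h • (1 : Matrix (Fin r) (Fin r) Z'))
      (π₀.mapMatrix : Matrix (Fin r) (Fin r) Z' →+* Matrix (Fin r) (Fin r) Z) q) :
    ∃ (M₀' : Type x) (_ : AddCommGroup M₀') (_ : Module Z' M₀') (q₀ : M₀' →+ M₀),
      IsModuleDeformation h π₀ q₀ ∧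
      ∃ e : M' ≃ₗ[Matrix (Fin r) (Fin r) Z'] (Fin r → M₀'),
        ∀ (x : M') (i : Fin r), q x i = q₀ (e x i) := by
  let _ : Module Z' M' :=
    Module.compHom M' (Matrix.scalar (Fin r) : Z' →+* Matrix (Fin r) (Fin r) Z')
  have := isScalarTower_toModuleCat Z' (ModuleCat.of (Matrix (Fin r) (Fin r) Z') M')
  let z0 : Fin r := ⟨0, hr⟩
  let e := toModuleCatFromModuleCatLinearEquiv Z' (ModuleCat.of (Matrix (Fin r) (Fin r) Z') M') z0
  -- `e` is linear for the scoped instance `Matrix.Module.matrixModule`, whose action on columns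
  -- is definitionally that of `matrixColModule`.
  refine ⟨toModuleCatObj Z' M' z0, inferInstance, inferInstance, toModuleCatObjComponent Z' q z0,
    isModuleDeformation_toModuleCatObjComponent hq z0, { e with map_smul' := e.map_smul },
    fun x i => ?_⟩
  show q x i = q (single z0 i (1 : Z') • x) z0
  rw [map_single_smul_of_equivariant hq.2.1, map_one, one_smul, Pi.single_eq_same]

/-- Every first order deformation, over `(M_r(Z'), h·1, M_r(π₀))`, of a column module
`M₀^r` over `M_r(Z)` is itself a column module: it is of the form `(M₀')^r` for a first
order `Z'`-deformation `M₀'` of `M₀`, compatibly with the identifications modulo `h`. -/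
theorem column_module_deformation_splits {Z' : Type u} {Z : Type v} [Ring Z'] [Ring Z]
    (h : Z') (π₀ : Z' →+* Z) (hdef : IsFirstOrderDeformation h π₀)
    (r : ℕ) (hr : 1 ≤ r)
    (M₀ : Type w) [AddCommGroup M₀] [Module Z M₀]
    (M' : Type x) [AddCommGroup M'] [Module (Matrix (Fin r) (Fin r) Z') M']
    (q : M' →+ (Fin r → M₀))
    (hq : IsModuleDeformation (h • (1 : Matrix (Fin r) (Fin r) Z'))
      (π₀.mapMatrix : Matrix (Fin r) (Fin r) Z' →+* Matrix (Fin r) (Fin r) Z) q) :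
    ∃ (M₀' : Type x) (_ : AddCommGroup M₀') (_ : Module Z' M₀') (q₀ : M₀' →+ M₀),
      IsModuleDeformation h π₀ q₀ ∧
      ∃ e : M' ≃ₗ[Matrix (Fin r) (Fin r) Z'] (Fin r → M₀'),
        ∀ (x : M') (i : Fin r), q x i = q₀ (e x i) :=
  column_module_deformation_splits_general h π₀ r hr M₀ M' q hq
end
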